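/- arXiv:2103.10340 — 2 statements merged into one kernel-verified Lean document; each statement's English description precedes it below -/
import Mathlib

section
/- Assume GCH. Let κ, λ be cardinals with ω₂ ≤ κ < λ, and let 𝓐 ⊆ [λ]^κ be a hypergraph possessing property C(2,ω) with |⋃𝓐| = λ. Then 𝓐 has a good cut. -/
open Cardinal Set

universe u

/-- `𝓔` possesses property C(k,ρ): every `k`-element subfamily of `𝓔` has
intersection of cardinality `< ρ`. -/
def HasPropC {α : Type u} (𝓔 : Set (Set α)) (k : ℕ) (ρ : Cardinal.{u}) : Prop :=
  ∀ 𝓔' : Finset (Set α), ↑𝓔' ⊆ 𝓔 → 𝓔'.card = k →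
    #(⋂₀ (𝓔' : Set (Set α)) : Set α) < ρ

/-- `Y` is a vertex cover of the hypergraph `𝓔`. -/
def IsVC {α : Type u} (𝓔 : Set (Set α)) (Y : Set α) : Prop :=
  Y ⊆ ⋃₀ 𝓔 ∧ ∀ E ∈ 𝓔, (Y ∩ E).Nonempty

/-- `Y` is a minimal vertex cover of `𝓔`: a vertex cover no proper subset of
which is a vertex cover. -/
def IsMinVC {α : Type u} (𝓔 : Set (Set α)) (Y : Set α) : Prop :=
  IsVC 𝓔 Y ∧ ∀ Z, Z ⊂ Y → ¬ IsVC 𝓔 Z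

/-- `𝓔` has a minimal vertex cover. -/
def HasMinVC {α : Type u} (𝓔 : Set (Set α)) : Prop := ∃ Y, IsMinVC 𝓔 Y

/-- `𝓔` has a maximizing well-ordering: a well-ordering of `⋃₀ 𝓔` in which
every edge has a maximal element. -/
def HasMaxWO {α : Type u} (𝓔 : Set (Set α)) : Prop :=
  ∃ r : (⋃₀ 𝓔 : Set α) → (⋃₀ 𝓔 : Set α) → Prop, IsWellOrder _ r ∧
    ∀ E ∈ 𝓔, ∃ m : (⋃₀ 𝓔 : Set α), (m : α) ∈ E ∧
      ∀ x : (⋃₀ 𝓔 : Set α), (x : α) ∈ E → ¬ r m x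

/-- `𝓑` is a shrink of `𝓐` (`𝓑 ≪ 𝓐`). -/
def IsShrink {α : Type u} (𝓑 𝓐 : Set (Set α)) : Prop :=
  ∀ B ∈ 𝓑, ∃ A ∈ 𝓐, B ⊆ A ∧ #(A \ B : Set α) < #A

/-- `G` (restricted to the ordinals below `cf(|⋃₀ 𝓐|)`) is a good cut of `𝓐`:
an increasing continuous sequence of subsets of `⋃₀ 𝓐` of cardinality `< |⋃₀ 𝓐|`,
starting at `∅`, with union `⋃₀ 𝓐`, such that every `A ∈ 𝓐` is contained in some
`G (β+1)` with `|G β ∩ A| < |A|`. -/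
def IsGoodCut {α : Type u} (𝓐 : Set (Set α)) (G : Ordinal.{u} → Set α) : Prop :=
  (∀ β γ : Ordinal.{u}, β ≤ γ → γ < (#(⋃₀ 𝓐 : Set α)).ord.cof.ord → G β ⊆ G γ) ∧
  G 0 = ∅ ∧
  (∀ β < (#(⋃₀ 𝓐 : Set α)).ord.cof.ord, Order.IsSuccLimit β → G β = ⋃ γ ∈ Set.Iio β, G γ) ∧
  (∀ β < (#(⋃₀ 𝓐 : Set α)).ord.cof.ord,
    #(G β) < #(⋃₀ 𝓐 : Set α) ∧ G β ⊆ ⋃₀ 𝓐) ∧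
  (⋃ β ∈ Set.Iio (#(⋃₀ 𝓐 : Set α)).ord.cof.ord, G β) = ⋃₀ 𝓐 ∧
  (∀ A ∈ 𝓐, ∃ β < (#(⋃₀ 𝓐 : Set α)).ord.cof.ord,
    A ⊆ G (β + 1) ∧ #(G β ∩ A : Set α) < #A)

/-!
Call `S` saturated if every edge meeting `S` in an uncountable set is contained in `S`. Since two
edges meet in a finite set, an edge with uncountable trace on `Y` is determined by any countably
infinite subset of that trace. Writing `Y` as the union of a chain of `cf |Y|` smaller sets and
counting the countable subsets of each piece with GCH shows that at most `|Y| + ℵ₀` edges have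
uncountable trace on `Y`. Adding all such edges `ω₂` times therefore yields a saturated superset of
`Y` of size at most `|Y| + κ`: an uncountable trace on the `ω₂`-th stage already has `ℵ₁` points
in an earlier stage, because `cf ω₂ > ℵ₁`.

Write `⋃ 𝓐` as the union of a chain `X_ξ` (`ξ < cf λ`) of sets of size `< λ`, and put
`G_β = ⋃_{γ<β} S_γ`, where `S_γ` is the saturation of `G_γ ∪ X_γ`. The sets `A ∩ S_γ` form a chain
covering the edge `A`, and a chain of countable sets has union of size at most `ℵ₁ < κ = |A|`; so
there is a least `β` with `A ∩ S_β` uncountable. Then `A ⊆ S_β ⊆ G_{β+1}`, while `A ∩ G_β` is the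
union of the countable sets `A ∩ S_γ` (`γ < β`), of size at most `ℵ₁ < |A|`.
-/

open Ordinal Order

theorem Cardinal.aleph_one_le_mk_iff_not_countable {β : Type u} {s : Set β} :
    ℵ₁ ≤ #s ↔ ¬ s.Countable := by
  rw [aleph_one_le_iff, ← not_le, le_aleph0_iff_set_countable]

section OrdinalFamily

variable {β : Type u} {G : Ordinal.{u} → Set β}

theorem Cardinal.mk_biUnion_lt_of_lt_cof {c : Cardinal.{u}} {o : Ordinal.{u}} (hc : ℵ₀ ≤ c)
    (ho : o.card < c.ord.cof) (hG : ∀ γ < o, #(G γ) < c) : #(⋃ γ < o, G γ) < c := by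
  have hU : ⋃ γ < o, G γ = ⋃ i : o.ToType, G i.toOrd := by
    ext x
    simp only [mem_iUnion]
    exact ⟨fun ⟨γ, hγ, hx⟩ => ⟨ToType.mk ⟨γ, hγ⟩, by simpa using hx⟩,
      fun ⟨i, hx⟩ => ⟨_, i.toOrd.2, hx⟩⟩
  rw [← mk_toType] at ho
  rw [hU]
  exact (mk_iUnion_le _).trans_lt (mul_lt_of_lt hc (ho.trans_le (cof_ord_le c))
    (iSup_lt_of_lt_cof_ord ho fun i => hG _ i.toOrd.2))

theorem Cardinal.exists_le_mk_of_le_mk_biUnion (hG : Monotone G) {δ : Ordinal.{u}}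
    {c : Cardinal.{u}} (hc : c < δ.cof) (h : c ≤ #(⋃ γ < δ, G γ)) : ∃ γ < δ, c ≤ #(G γ) := by
  obtain ⟨T, hT, rfl⟩ := le_mk_iff_exists_subset.1 h
  have hstage : ∀ x : T, ∃ γ < δ, (x : β) ∈ G γ := fun x => by simpa using hT x.2
  choose stage hstage_lt hmem using hstage
  refine ⟨⨆ x, stage x, iSup_lt_of_lt_cof hc hstage_lt, mk_le_mk_of_subset fun x hx => ?_⟩
  exact hG (Ordinal.le_iSup stage ⟨x, hx⟩) (hmem ⟨x, hx⟩)

theorem Cardinal.mk_biUnion_le_of_monotone (hG : Monotone G) {δ : Ordinal.{u}}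
    {c : Cardinal.{u}} (hc : ℵ₀ ≤ c) (h : ∀ γ < δ, #(G γ) < c) : #(⋃ γ < δ, G γ) ≤ c := by
  rcases lt_or_ge c δ.cof with hδ | hδ
  · by_contra! hlt
    obtain ⟨γ, hγ, hle⟩ := exists_le_mk_of_le_mk_biUnion hG hδ hlt.le
    exact (h γ hγ).not_ge hle
  · obtain ⟨s, hs, hs_card⟩ := Order.exists_cof_eq δ.ToType
    rw [cof_toType] at hs_card
    have hsub : ⋃ γ < δ, G γ ⊆ ⋃ i : s, G (i : δ.ToType).toOrd := by
      refine iUnion₂_subset fun γ hγ => ?_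
      obtain ⟨i, hi, hle⟩ := hs (ToType.mk ⟨γ, hγ⟩)
      have hγi := ToType.mk.symm.monotone hle
      rw [OrderIso.symm_apply_apply] at hγi
      exact (hG hγi).trans
        (subset_iUnion (fun j : s => G (j : δ.ToType).toOrd) ⟨i, hi⟩)
    calc #(⋃ γ < δ, G γ) ≤ #s * ⨆ i : s, #(G (i : δ.ToType).toOrd) :=
          (mk_le_mk_of_subset hsub).trans (mk_iUnion_le _)
      _ ≤ c * c := mul_le_mul' (hs_card ▸ hδ)
          (ciSup_le' fun i => (h _ (i : δ.ToType).toOrd.2).le)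
      _ = c := mul_eq_self hc

theorem exists_monotone_filtration (Y : Set β) (hY : ℵ₀ ≤ #Y) :
    ∃ Z : Ordinal.{u} → Set β, Monotone Z ∧ (∀ ξ, Z ξ ⊆ Y) ∧
      (∀ ξ < (#Y).ord.cof.ord, #(Z ξ) < #Y) ∧ ⋃ ξ < (#Y).ord.cof.ord, Z ξ = Y := by
  set θ := (#Y).ord.cof.ord
  obtain ⟨f, hf⟩ := exists_isFundamentalSeq (o := (#Y).ord) rfl
  obtain ⟨e⟩ : Nonempty (Y ≃ (#Y).ord.ToType) := Cardinal.eq.1 (by rw [mk_toType, card_ord])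
  set bound : Ordinal.{u} → Ordinal.{u} :=
    fun ξ => if h : ξ < θ then (f ⟨ξ, h⟩ : Ordinal) + 1 else (#Y).ord
  have hbound : Monotone bound := by
    intro ξ ζ hξζ
    simp only [bound]
    split_ifs with hξ hζ hζ
    · gcongr
      exact hf.strictMono.monotone (show (⟨ξ, hξ⟩ : Iio θ) ≤ ⟨ζ, hζ⟩ from hξζ)
    · exact add_one_le_iff.2 (f _).2
    · exact absurd (hξζ.trans_lt hζ) hξ
    · exact le_rfl
  refine ⟨fun ξ => Subtype.val '' {y : Y | ((e y).toOrd : Ordinal) < bound ξ},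
    fun ξ ζ h => image_mono (ofPred_subset_ofPred.2 fun y hy => hy.trans_le (hbound h)),
    fun ξ => Subtype.coe_image_subset _ _, fun ξ hξ => ?_, ?_⟩
  · have hlt : bound ξ < (#Y).ord := by
      simp only [bound, dif_pos hξ]
      exact (isSuccLimit_ord hY).add_one_lt (f _).2
    have hinj : Function.Injective fun y : {y : Y | ((e y).toOrd : Ordinal) < bound ξ} =>
        (ToType.mk ⟨_, y.2⟩ : (bound ξ).ToType) := fun y z h => by
      have hval := congrArg Subtype.val ((ToType.mk (o := bound ξ)).injective h)
      exact Subtype.ext (e.injective (ToType.mk.symm.injective (Subtype.ext hval)))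
    calc #(Subtype.val '' {y : Y | ((e y).toOrd : Ordinal) < bound ξ})
        ≤ #{y : Y | ((e y).toOrd : Ordinal) < bound ξ} := mk_image_le
      _ ≤ #(bound ξ).ToType := mk_le_of_injective hinj
      _ < #Y := by rw [mk_toType]; exact lt_ord.1 hlt
  · refine (iUnion₂_subset fun ξ _ => Subtype.coe_image_subset _ _).antisymm fun y hy => ?_
    obtain ⟨_, ⟨ξ, rfl⟩, hle⟩ := hf.isCofinal_range (e ⟨y, hy⟩).toOrd
    refine mem_iUnion₂.2 ⟨ξ, ξ.2, ⟨y, hy⟩, ?_, rfl⟩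
    simp only [mem_ofPred_eq, bound]
    rw [dif_pos (mem_Iio.1 ξ.2)]
    exact Order.lt_add_one_iff.2 (Subtype.coe_le_coe.2 hle)

end OrdinalFamily

def GCH : Prop := ∀ μ : Cardinal.{u}, ℵ₀ ≤ μ → 2 ^ μ = succ μ

theorem GCH.power_aleph0_le (hGCH : GCH.{u}) {ν : Cardinal.{u}} (hν : ℵ₀ ≤ ν) :
    ν ^ ℵ₀ ≤ succ ν :=
  calc ν ^ ℵ₀ ≤ ν ^ ν := power_le_power_left (aleph0_pos.trans_le hν).ne' hν
    _ = succ ν := (power_self_eq hν).trans (hGCH ν hν)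

section Hypergraph

variable {α : Type u} {𝓐 : Set (Set α)}

theorem HasPropC.pairwise_finite_inter (hC : HasPropC 𝓐 2 ℵ₀) :
    𝓐.Pairwise fun A B => (A ∩ B).Finite := by
  classical
  intro A hA B hB hAB
  have h := hC {A, B} (by simp [insert_subset_iff, hA, hB]) (Finset.card_pair hAB)
  simpa [lt_aleph0_iff_set_finite] using h

theorem mk_setOf_infinite_inter_le (h𝓐 : 𝓐.Pairwise fun A B => (A ∩ B).Finite) (Z : Set α) :
    #{A ∈ 𝓐 | (A ∩ Z).Infinite} ≤ max #Z ℵ₀ ^ ℵ₀ := by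
  have hpick : ∀ A : {A ∈ 𝓐 | (A ∩ Z).Infinite}, ∃ t ⊆ (A : Set α) ∩ Z, #t = ℵ₀ :=
    fun A => le_mk_iff_exists_subset.1 (infinite_iff.1 A.2.2.to_subtype)
  choose t ht_sub ht_card using hpick
  let code A : {s : Set α // s ⊆ Z ∧ #s ≤ ℵ₀} :=
    ⟨t A, (ht_sub A).trans inter_subset_right, (ht_card A).le⟩
  refine (mk_le_of_injective (f := code) fun A B hAB => ?_).trans (mk_bounded_subset_le Z ℵ₀)
  by_contra hne
  have htAB : t A = t B := congrArg Subtype.val hAB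
  have htA : t A ⊆ (A : Set α) ∩ B := subset_inter (fun x hx => (ht_sub A hx).1)
    (htAB ▸ fun x hx => (ht_sub B hx).1)
  have hfin := (h𝓐 A.2.1 B.2.1 (Subtype.coe_injective.ne hne)).subset htA
  exact (lt_aleph0_iff_set_finite.2 hfin).ne (ht_card A)

def heavyEdges (𝓐 : Set (Set α)) (Y : Set α) : Set (Set α) :=
  {A ∈ 𝓐 | ¬ (A ∩ Y).Countable}

theorem mk_heavyEdges_le (hGCH : GCH.{u}) (h𝓐 : 𝓐.Pairwise fun A B => (A ∩ B).Finite)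
    (Y : Set α) : #(heavyEdges 𝓐 Y) ≤ max #Y ℵ₀ := by
  rcases le_or_gt #Y ℵ₀ with hY | hY
  · have : heavyEdges 𝓐 Y = ∅ := eq_empty_of_forall_notMem fun A hA =>
      hA.2 ((le_aleph0_iff_set_countable.1 hY).mono inter_subset_right)
    simp [this]
  obtain ⟨Z, hZ_mono, -, hZ_card, hZ_cover⟩ := exists_monotone_filtration Y hY.le
  -- a chain of finite sets has countable union
  have hsub : heavyEdges 𝓐 Y ⊆ ⋃ ξ < (#Y).ord.cof.ord, {A ∈ 𝓐 | (A ∩ Z ξ).Infinite} := by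
    rintro A ⟨hA, hheavy⟩
    by_contra hnot
    simp only [mem_iUnion, mem_ofPred_eq, not_exists, not_and, Set.not_infinite] at hnot
    apply hheavy
    rw [← hZ_cover, inter_iUnion₂]
    exact le_aleph0_iff_set_countable.1 (mk_biUnion_le_of_monotone
      (fun _ _ h => inter_subset_inter_right A (hZ_mono h)) le_rfl
      fun ξ hξ => lt_aleph0_iff_set_finite.2 (hnot ξ hξ hA))
  have hcof : ((#Y).ord.cof.ord).card ≤ #Y := by rw [card_ord]; exact cof_ord_le _
  refine ((mk_le_mk_of_subset hsub).trans (mk_biUnion_le_of_le hcof hY.le _ fun ξ hξ => ?_)).trans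
    (le_max_left _ _)
  exact (mk_setOf_infinite_inter_le h𝓐 _).trans ((hGCH.power_aleph0_le (le_max_right _ _)).trans
    (succ_le_of_lt (max_lt (hZ_card ξ hξ) hY)))

end Hypergraph

section Saturation

variable {α : Type u} {𝓐 : Set (Set α)} {Y : Set α}

def IsSaturated (𝓐 : Set (Set α)) (S : Set α) : Prop :=
  ∀ A ∈ heavyEdges 𝓐 S, A ⊆ S

noncomputable def saturationStage (𝓐 : Set (Set α)) (Y : Set α) (ξ : Ordinal.{u}) : Set α :=
  Y ∪ ⋃ η : Iio ξ, ⋃₀ heavyEdges 𝓐 (saturationStage 𝓐 Y η)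
termination_by ξ
decreasing_by exact η.2

theorem saturationStage_eq (ξ : Ordinal.{u}) :
    saturationStage 𝓐 Y ξ = Y ∪ ⋃ η < ξ, ⋃₀ heavyEdges 𝓐 (saturationStage 𝓐 Y η) := by
  rw [saturationStage, iUnion_subtype]
  rfl

theorem subset_saturationStage (ξ : Ordinal.{u}) : Y ⊆ saturationStage 𝓐 Y ξ := by
  rw [saturationStage_eq]
  exact subset_union_left

theorem sUnion_heavyEdges_subset_saturationStage {η ξ : Ordinal.{u}} (h : η < ξ) :
    ⋃₀ heavyEdges 𝓐 (saturationStage 𝓐 Y η) ⊆ saturationStage 𝓐 Y ξ := by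
  rw [saturationStage_eq ξ]
  exact subset_union_of_subset_right
    (subset_iUnion₂ (s := fun η _ => ⋃₀ heavyEdges 𝓐 (saturationStage 𝓐 Y η)) η h) _

theorem saturationStage_mono : Monotone (saturationStage 𝓐 Y) := fun ξ ζ h => by
  rw [saturationStage_eq ξ]
  exact union_subset (subset_saturationStage ζ)
    (iUnion₂_subset fun η hη => sUnion_heavyEdges_subset_saturationStage (hη.trans_le h))

theorem saturationStage_subset (ξ : Ordinal.{u}) : saturationStage 𝓐 Y ξ ⊆ Y ∪ ⋃₀ 𝓐 := by
  rw [saturationStage_eq]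
  exact union_subset_union_right _ (iUnion₂_subset fun _ _ => sUnion_mono (sep_subset _ _))

theorem saturationStage_subset_biUnion {ξ : Ordinal.{u}} (hξ : IsSuccLimit ξ) :
    saturationStage 𝓐 Y ξ ⊆ ⋃ η < ξ, saturationStage 𝓐 Y η := by
  rw [saturationStage_eq ξ]
  refine union_subset (fun y hy => mem_iUnion₂.2 ⟨0, hξ.bot_lt, subset_saturationStage 0 hy⟩)
    (iUnion₂_subset fun η hη => ?_)
  exact (sUnion_heavyEdges_subset_saturationStage (lt_add_one η)).trans
    (subset_iUnion₂ (s := fun η _ => saturationStage 𝓐 Y η) (η + 1) (hξ.add_one_lt hη))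

theorem isSaturated_saturationStage {ξ : Ordinal.{u}} (hξ : ℵ₁ < ξ.cof) :
    IsSaturated 𝓐 (saturationStage 𝓐 Y ξ) := by
  rintro A ⟨hA, hheavy⟩
  have hlim : IsSuccLimit ξ :=
    one_lt_cof_iff.1 (one_lt_aleph0.trans (aleph0_lt_aleph_one.trans hξ))
  have hbig : ℵ₁ ≤ #(⋃ η < ξ, A ∩ saturationStage 𝓐 Y η) := by
    rw [← inter_iUnion₂]
    exact (aleph_one_le_mk_iff_not_countable.2 hheavy).trans
      (mk_le_mk_of_subset (inter_subset_inter_right _ (saturationStage_subset_biUnion hlim)))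
  obtain ⟨η, hη, hle⟩ := exists_le_mk_of_le_mk_biUnion
    (fun _ _ h => inter_subset_inter_right A (saturationStage_mono h)) hξ hbig
  have hηheavy : A ∈ heavyEdges 𝓐 (saturationStage 𝓐 Y η) :=
    ⟨hA, aleph_one_le_mk_iff_not_countable.1 hle⟩
  exact (subset_sUnion_of_mem hηheavy).trans (sUnion_heavyEdges_subset_saturationStage hη)

theorem mk_saturationStage_le (hGCH : GCH.{u}) (h𝓐 : 𝓐.Pairwise fun A B => (A ∩ B).Finite)
    {ν : Cardinal.{u}} (hν : ℵ₀ ≤ ν) (hY : #Y ≤ ν) (h𝓐ν : ∀ A ∈ 𝓐, #A ≤ ν)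
    (ξ : Ordinal.{u}) (hξ : ξ.card ≤ ν) : #(saturationStage 𝓐 Y ξ) ≤ ν := by
  induction ξ using WellFoundedLT.induction with
  | ind ξ IH =>
  have hstep : ∀ η < ξ, #(⋃₀ heavyEdges 𝓐 (saturationStage 𝓐 Y η)) ≤ ν := fun η hη =>
    calc _ ≤ #(heavyEdges 𝓐 (saturationStage 𝓐 Y η)) *
          ⨆ A : heavyEdges 𝓐 (saturationStage 𝓐 Y η), #(A : Set α) := mk_sUnion_le _
      _ ≤ ν * ν := mul_le_mul'
          ((mk_heavyEdges_le hGCH h𝓐 _).trans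
            (max_le (IH η hη ((card_le_card hη.le).trans hξ)) hν))
          (ciSup_le' fun A => h𝓐ν A A.2.1)
      _ = ν := mul_eq_self hν
  rw [saturationStage_eq]
  calc _ ≤ #Y + #(⋃ η < ξ, ⋃₀ heavyEdges 𝓐 (saturationStage 𝓐 Y η)) := mk_union_le _ _
    _ ≤ ν + ν := add_le_add hY (mk_biUnion_le_of_le hξ hν _ hstep)
    _ = ν := add_eq_self hν

noncomputable def saturation (𝓐 : Set (Set α)) (Y : Set α) : Set α :=
  saturationStage 𝓐 Y (ω_ 2)

theorem subset_saturation : Y ⊆ saturation 𝓐 Y :=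
  subset_saturationStage _

theorem saturation_subset_sUnion (hY : Y ⊆ ⋃₀ 𝓐) : saturation 𝓐 Y ⊆ ⋃₀ 𝓐 :=
  (saturationStage_subset _).trans (union_subset hY subset_rfl)

theorem isSaturated_saturation : IsSaturated 𝓐 (saturation 𝓐 Y) := by
  refine isSaturated_saturationStage ?_
  rw [← one_add_one_eq_two, cof_omega_add_one]
  exact aleph_lt_aleph.2 (lt_add_one 1)

theorem mk_saturation_le (hGCH : GCH.{u}) (h𝓐 : 𝓐.Pairwise fun A B => (A ∩ B).Finite)
    {ν : Cardinal.{u}} (hν : ℵ_ 2 ≤ ν) (hY : #Y ≤ ν) (h𝓐ν : ∀ A ∈ 𝓐, #A ≤ ν) :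
    #(saturation 𝓐 Y) ≤ ν :=
  mk_saturationStage_le hGCH h𝓐 ((aleph0_le_aleph 2).trans hν) hY h𝓐ν _ (by rwa [card_omega])

end Saturation

section SaturatedChain

variable {α : Type u} {𝓐 : Set (Set α)} {X : Ordinal.{u} → Set α}

noncomputable def saturatedChain (𝓐 : Set (Set α)) (X : Ordinal.{u} → Set α)
    (β : Ordinal.{u}) : Set α :=
  ⋃ γ : Iio β, saturation 𝓐 (saturatedChain 𝓐 X γ ∪ X γ)
termination_by β
decreasing_by exact γ.2

local notation "G" => saturatedChain 𝓐 X

theorem saturatedChain_eq (β : Ordinal.{u}) :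
    G β = ⋃ γ < β, saturation 𝓐 (G γ ∪ X γ) := by
  rw [saturatedChain, iUnion_subtype]
  rfl

theorem saturation_subset_saturatedChain {γ β : Ordinal.{u}} (h : γ < β) :
    saturation 𝓐 (G γ ∪ X γ) ⊆ G β := by
  rw [saturatedChain_eq β]
  exact subset_iUnion₂ (s := fun γ _ => saturation 𝓐 (G γ ∪ X γ)) γ h

theorem saturatedChain_mono : Monotone G := fun β β' h => by
  rw [saturatedChain_eq β]
  exact iUnion₂_subset fun γ hγ => saturation_subset_saturatedChain (hγ.trans_le h)

theorem monotone_saturation_saturatedChain : Monotone fun γ => saturation 𝓐 (G γ ∪ X γ) := by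
  intro γ β h
  rcases h.lt_or_eq with h | rfl
  · exact (saturation_subset_saturatedChain h).trans (subset_union_left.trans subset_saturation)
  · exact subset_rfl

theorem saturatedChain_zero : G 0 = ∅ := by
  rw [saturatedChain_eq]
  simp

theorem saturatedChain_of_isSuccLimit {β : Ordinal.{u}} (hβ : IsSuccLimit β) :
    G β = ⋃ γ ∈ Iio β, G γ := by
  refine subset_antisymm ?_ (iUnion₂_subset fun γ hγ => saturatedChain_mono (le_of_lt hγ))
  rw [saturatedChain_eq β]
  exact iUnion₂_subset fun γ hγ => (saturation_subset_saturatedChain (lt_add_one γ)).trans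
    (subset_iUnion₂ (s := fun γ _ => G γ) (γ + 1) (hβ.add_one_lt hγ))

theorem saturatedChain_subset_sUnion (hX : ∀ ξ, X ξ ⊆ ⋃₀ 𝓐) (β : Ordinal.{u}) :
    G β ⊆ ⋃₀ 𝓐 := by
  induction β using WellFoundedLT.induction with
  | ind β IH =>
  rw [saturatedChain_eq]
  exact iUnion₂_subset fun γ hγ => saturation_subset_sUnion (union_subset (IH γ hγ) (hX γ))

theorem mk_saturatedChain_lt (hGCH : GCH.{u}) (h𝓐 : 𝓐.Pairwise fun A B => (A ∩ B).Finite)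
    {κ lam : Cardinal.{u}} (hκ : ℵ_ 2 ≤ κ) (hκlam : κ < lam) (h𝓐κ : ∀ A ∈ 𝓐, #A ≤ κ)
    (hX : ∀ ξ < lam.ord.cof.ord, #(X ξ) < lam) (β : Ordinal.{u}) (hβ : β < lam.ord.cof.ord) :
    #(G β) < lam := by
  have hlam : ℵ₀ ≤ lam := (aleph0_le_aleph 2).trans (hκ.trans hκlam.le)
  induction β using WellFoundedLT.induction with
  | ind β IH =>
  rw [saturatedChain_eq]
  refine mk_biUnion_lt_of_lt_cof hlam (lt_ord.1 hβ) fun γ hγ => ?_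
  have hγlam : #(G γ ∪ X γ : Set α) < lam := (mk_union_le _ _).trans_lt
    (add_lt_of_lt hlam (IH γ hγ (hγ.trans hβ)) (hX γ (hγ.trans hβ)))
  exact (mk_saturation_le hGCH h𝓐 (hκ.trans (le_max_right _ _)) (le_max_left _ _)
    fun A hA => (h𝓐κ A hA).trans (le_max_right _ _)).trans_lt (max_lt hγlam hκlam)

theorem biUnion_saturatedChain {θ : Ordinal.{u}} (hθ : IsSuccLimit θ) (hX : ∀ ξ, X ξ ⊆ ⋃₀ 𝓐)
    (hX_cover : ⋃ ξ < θ, X ξ = ⋃₀ 𝓐) : ⋃ β ∈ Iio θ, G β = ⋃₀ 𝓐 := by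
  refine (iUnion₂_subset fun β _ => saturatedChain_subset_sUnion hX β).antisymm ?_
  rw [← hX_cover]
  exact iUnion₂_mono' fun ξ hξ => ⟨ξ + 1, hθ.add_one_lt hξ,
    subset_union_right.trans
      (subset_saturation.trans (saturation_subset_saturatedChain (lt_add_one ξ)))⟩

theorem exists_saturatedChain_cut {θ : Ordinal.{u}} {A : Set α} (hA : A ∈ 𝓐)
    (hAX : A ⊆ ⋃ ξ < θ, X ξ) (hA_card : ℵ₁ < #A) :
    ∃ β < θ, A ⊆ G (β + 1) ∧ #(G β ∩ A : Set α) < #A := by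
  set S := fun γ => A ∩ saturation 𝓐 (G γ ∪ X γ)
  have hS : Monotone S := fun _ _ h =>
    inter_subset_inter_right A (monotone_saturation_saturatedChain h)
  have hS_card : ∀ β, (∀ γ < β, (S γ).Countable) → #(⋃ γ < β, S γ) ≤ ℵ₁ := fun β h =>
    mk_biUnion_le_of_monotone hS (aleph0_le_aleph 1)
      fun γ hγ => lt_aleph_one_iff.2 (le_aleph0_iff_set_countable.2 (h γ hγ))
  have hexists : ∃ β, β < θ ∧ ¬ (S β).Countable := by
    by_contra! h
    refine (hS_card θ h).not_gt (hA_card.trans_le (mk_le_mk_of_subset fun x hx => ?_))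
    obtain ⟨ξ, hξ, hxξ⟩ := mem_iUnion₂.1 (hAX hx)
    exact mem_iUnion₂.2 ⟨ξ, hξ, hx, subset_saturation (Or.inr hxξ)⟩
  obtain ⟨β, ⟨hβθ, hβ⟩, hmin⟩ := wellFounded_lt.has_min _ hexists
  have hcut : G β ∩ A = ⋃ γ < β, S γ := by
    rw [saturatedChain_eq, iUnion₂_inter]
    simp only [S, inter_comm]
  refine ⟨β, hβθ, ?_, ?_⟩
  · exact (isSaturated_saturation A ⟨hA, hβ⟩).trans
      (saturation_subset_saturatedChain (lt_add_one β))
  · rw [hcut]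
    refine (hS_card β fun γ hγ => ?_).trans_lt hA_card
    by_contra hγ'
    exact hmin γ ⟨hγ.trans hβθ, hγ'⟩ hγ

end SaturatedChain

theorem goodCut_of_GCH_general {α : Type u}
    (hGCH : ∀ μ : Cardinal.{u}, ℵ₀ ≤ μ → 2 ^ μ = Order.succ μ)
    (κ lam : Cardinal.{u}) (hκ : Cardinal.aleph 2 ≤ κ) (hkl : κ < lam)
    (𝓐 : Set (Set α)) (hspec : ∀ A ∈ 𝓐, #A = κ)
    (hC : HasPropC 𝓐 2 ℵ₀)
    (hU : #(⋃₀ 𝓐 : Set α) = lam) :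
    ∃ G, IsGoodCut 𝓐 G := by
  subst hU
  have h𝓐 := hC.pairwise_finite_inter
  have hU : ℵ₀ ≤ #(⋃₀ 𝓐) := (aleph0_le_aleph 2).trans (hκ.trans hkl.le)
  have hθ : IsSuccLimit (#(⋃₀ 𝓐)).ord.cof.ord :=
    isSuccLimit_ord (aleph0_le_cof_iff.2 (one_lt_cof_iff.2 (isSuccLimit_ord hU)))
  obtain ⟨X, -, hX_sub, hX_card, hX_cover⟩ := exists_monotone_filtration (⋃₀ 𝓐) hU
  refine ⟨saturatedChain 𝓐 X, fun β γ h _ => saturatedChain_mono h, saturatedChain_zero,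
    fun β _ hβ => saturatedChain_of_isSuccLimit hβ,
    fun β hβ => ⟨mk_saturatedChain_lt hGCH h𝓐 hκ hkl (fun A hA => (hspec A hA).le) hX_card β hβ,
      saturatedChain_subset_sUnion hX_sub β⟩,
    biUnion_saturatedChain hθ hX_sub hX_cover, fun A hA => ?_⟩
  refine exists_saturatedChain_cut hA (by rw [hX_cover]; exact subset_sUnion_of_mem hA) ?_
  rw [hspec A hA]
  exact (aleph_lt_aleph.2 one_lt_two).trans_le hκ

/-- Assuming GCH, if `ω₂ ≤ κ < lam` and `𝓐 ⊆ [lam]^κ` possesses property C(2,ω)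
with `|⋃₀ 𝓐| = lam`, then `𝓐` has a good cut. -/
theorem goodCut_of_GCH {α : Type u}
    (hGCH : ∀ μ : Cardinal.{u}, ℵ₀ ≤ μ → 2 ^ μ = Order.succ μ)
    (κ lam : Cardinal.{u}) (hκ : Cardinal.aleph 2 ≤ κ) (hkl : κ < lam)
    (hα : #α = lam)
    (𝓐 : Set (Set α)) (hspec : ∀ A ∈ 𝓐, #A = κ)
    (hC : HasPropC 𝓐 2 ℵ₀)
    (hU : #(⋃₀ 𝓐 : Set α) = lam) :
    ∃ G, IsGoodCut 𝓐 G :=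
  goodCut_of_GCH_general hGCH κ lam hκ hkl 𝓐 hspec hC hU
end

section
/- If 𝓐 is a countable hypergraph possessing property C(k,r) for some k, r ∈ ω, then 𝓐 has a maximizing well-ordering. -/
open Cardinal Set

universe u

/-!
We induct on `k`, proving the stronger claim that the whole vertex set `⋃₀ 𝓑` has a maximum
as well. Under C(1, ρ) with `ρ ≤ ℵ₀` all edges are finite, so any well-order with one vertex
moved to the top will do.

For the step, enumerate the edges as `B 0, B 1, …` and split the vertices into the blocks
`W j = B j \ ⋃ i < j, B i`. The traces `B n ∩ W j` different from `W j` satisfy C(k), since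
`k` of them together with `B j` are `k + 1` distinct edges whose intersection is at least as
large. By induction each block carries a well-order maximizing its traces and `W j` itself
(a vertex of `W j` outside all traces can be moved to the top). Now order the blocks as
`1 < 2 < ⋯` with one nonempty block on top, and lexicographically within blocks: an edge
`B n` meets only the blocks `W 0, …, W n`, so its maximum is its maximum in the last of them.
-/
section RelMax

variable {α : Type*} (s : α → α → Prop)

def IsRelMax (S : Set α) (m : α) : Prop := m ∈ S ∧ ∀ x ∈ S, ¬ s m x

def IsMaximizing (𝓑 : Set (Set α)) : Prop := ∀ B ∈ 𝓑, B.Nonempty → ∃ m, IsRelMax s B m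

variable {s}

lemma IsMaximizing.mono {𝓑 𝓒 : Set (Set α)} (h : IsMaximizing s 𝓑) (h𝓒 : 𝓒 ⊆ 𝓑) :
    IsMaximizing s 𝓒 :=
  fun B hB => h B (h𝓒 hB)

lemma exists_isRelMax_of_finite [IsStrictOrder α s] {S : Set α} (hS : S.Finite)
    (hne : S.Nonempty) : ∃ m, IsRelMax s S m := by
  obtain ⟨⟨m, hm⟩, -, hmax⟩ :=
    (hS.wellFoundedOn (r := Function.swap s)).has_min univ ⟨⟨_, hne.some_mem⟩, trivial⟩
  exact ⟨m, hm, fun x hx => hmax ⟨x, hx⟩ trivial⟩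

lemma isMaximizing_of_finite [IsStrictOrder α s] {𝓑 : Set (Set α)} (h : ∀ B ∈ 𝓑, B.Finite) :
    IsMaximizing s 𝓑 :=
  fun B hB => exists_isRelMax_of_finite (h B hB)

end RelMax

section Lex

variable {α ι : Type*} (r : ι → ι → Prop) (κ : α → ι) (s : ι → α → α → Prop)

def lexRel (x y : α) : Prop := r (κ x) (κ y) ∨ κ x = κ y ∧ s (κ x) x y

instance isWellOrder_lexRel [IsWellOrder ι r] [∀ i, IsWellOrder α (s i)] :
    IsWellOrder α (lexRel r κ s) := by
  let F : α → Ordinal ×ₗ Ordinal := fun x =>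
    toLex (Ordinal.typein r (κ x), Ordinal.typein (s (κ x)) x)
  suffices e : lexRel r κ s ↪r ((· < ·) : Ordinal ×ₗ Ordinal → Ordinal ×ₗ Ordinal → Prop) from
    e.isWellOrder
  refine ⟨⟨F, fun x y hxy => ?_⟩, ?_⟩
  · simp only [F, toLex_inj, Prod.mk.injEq, Ordinal.typein_inj] at hxy
    obtain ⟨hκ, hxy⟩ := hxy
    rw [← hκ, Ordinal.typein_inj] at hxy
    exact hxy
  · intro x y
    change F x < F y ↔ _
    simp only [F, lexRel, Prod.Lex.toLex_lt_toLex, Ordinal.typein_lt_typein, Ordinal.typein_inj]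
    refine or_congr Iff.rfl (and_congr_right fun hκ => ?_)
    rw [← hκ]
    exact Ordinal.typein_lt_typein _

variable {r κ s}

lemma isRelMax_lexRel {S : Set α} {m : α} (hκ : IsRelMax r (κ '' S) (κ m))
    (hm : IsRelMax (s (κ m)) (S ∩ κ ⁻¹' {κ m}) m) : IsRelMax (lexRel r κ s) S m := by
  refine ⟨hm.1.1, fun x hx hmx => ?_⟩
  rcases hmx with h | ⟨h, hs⟩
  · exact hκ.2 _ (mem_image_of_mem κ hx) h
  · exact hm.2 x ⟨hx, h.symm⟩ hs

end Lex

section Top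

variable {α : Type*} {s : α → α → Prop} {p : α} {S : Set α}

open Classical in
def topRel (s : α → α → Prop) (p : α) : α → α → Prop :=
  lexRel (· < ·) (fun x => decide (x = p)) fun _ => s

instance [IsWellOrder α s] : IsWellOrder α (topRel s p) :=
  isWellOrder_lexRel _ _ _

lemma isRelMax_topRel [Std.Irrefl s] (hp : p ∈ S) : IsRelMax (topRel s p) S p := by
  refine ⟨hp, fun x _ hpx => ?_⟩
  rcases hpx with h | ⟨h, hs⟩
  · simp only [decide_true] at h
    exact (Bool.le_true _).not_gt h
  · obtain rfl : x = p := by simpa using h.symm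
    exact irrefl _ hs

lemma IsRelMax.topRel {m : α} (h : IsRelMax s S m) (hp : p ∉ S) :
    IsRelMax (topRel s p) S m := by
  refine ⟨h.1, fun x hx hmx => ?_⟩
  rcases hmx with hlt | ⟨-, hs⟩
  · simp [ne_of_mem_of_not_mem h.1 hp, ne_of_mem_of_not_mem hx hp] at hlt
  · exact h.2 x hx hs

end Top

section Traces

variable {α : Type u} {𝓑 : Set (Set α)} {k : ℕ} {ρ : Cardinal.{u}}

lemma HasPropC.succ (h : HasPropC 𝓑 k ρ) : HasPropC 𝓑 (k + 1) ρ := by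
  intro 𝓔 h𝓔 hcard
  obtain ⟨E, hE⟩ : 𝓔.Nonempty := Finset.card_pos.1 (by omega)
  have hsub : ↑(𝓔.erase E) ⊆ 𝓑 := (Finset.coe_subset.2 (Finset.erase_subset E 𝓔)).trans h𝓔
  refine lt_of_le_of_lt (mk_le_mk_of_subset ?_)
    (h _ hsub (by rw [Finset.card_erase_of_mem hE, hcard, Nat.add_sub_cancel]))
  exact sInter_subset_sInter (Finset.coe_subset.2 (Finset.erase_subset E 𝓔))

lemma HasPropC.finite_of_one (h : HasPropC 𝓑 1 ρ) (hρ : ρ ≤ ℵ₀) {B : Set α} (hB : B ∈ 𝓑) :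
    B.Finite := by
  have hB := h {B} (by simpa using hB) (Finset.card_singleton B)
  rw [Finset.coe_singleton, sInter_singleton] at hB
  exact lt_aleph0_iff_set_finite.1 (hB.trans_le hρ)

def traces (𝓑 : Set (Set α)) (W : Set α) : Set (Set α) := (· ∩ W) '' 𝓑 \ {W}

lemma sUnion_traces_subset (W : Set α) : ⋃₀ traces 𝓑 W ⊆ W := by
  rintro x ⟨_, ⟨⟨A, -, rfl⟩, -⟩, hx⟩
  exact hx.2

lemma HasPropC.traces (h : HasPropC 𝓑 (k + 2) ρ) {B W : Set α} (hB : B ∈ 𝓑) (hW : W ⊆ B) :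
    HasPropC (traces 𝓑 W) (k + 1) ρ := by
  classical
  intro 𝒯 h𝒯 hcard
  choose! rep hrep𝓑 hrep using fun T (hT : T ∈ _root_.traces 𝓑 W) => hT.1
  have hrepT : ∀ T ∈ 𝒯, rep T ∩ W = T := fun T hT => hrep T (h𝒯 hT)
  have hinj : Set.InjOn rep 𝒯 := fun T₁ h₁ T₂ h₂ he => by
    rw [← hrepT T₁ h₁, ← hrepT T₂ h₂, he]
  have hBnot : B ∉ 𝒯.image rep := by
    simp only [Finset.mem_image, not_exists, not_and]
    intro T hT hTB
    exact (h𝒯 hT).2 (by rw [← hrepT T hT, hTB, inter_eq_right.2 hW]; rfl)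
  refine lt_of_le_of_lt (mk_le_mk_of_subset ?_) (h (insert B (𝒯.image rep)) ?_ ?_)
  · obtain ⟨T₀, hT₀⟩ : 𝒯.Nonempty := Finset.card_pos.1 (by omega)
    intro x hx
    simp only [Finset.coe_insert, Finset.coe_image, sInter_insert, sInter_image]
    refine ⟨hW ?_, mem_iInter₂.2 fun T hT => ?_⟩
    · exact (hrepT T₀ hT₀ ▸ hx T₀ hT₀).2
    · exact (hrepT T hT ▸ hx T hT).1
  · simp only [Finset.coe_insert, Finset.coe_image, insert_subset_iff]
    exact ⟨hB, image_subset_iff.2 fun T hT => hrep𝓑 T (h𝒯 hT)⟩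
  · rw [Finset.card_insert_of_notMem hBnot, Finset.card_image_of_injOn hinj, hcard]

end Traces

section Blocks

variable {α : Type*} (B : ℕ → Set α)

open Classical in
noncomputable def firstIndex (x : α) : ℕ := if h : ∃ n, x ∈ B n then Nat.find h else 0

variable {B}

lemma firstIndex_eq_iff {x : α} {n : ℕ} (hx : x ∈ B n) (j : ℕ) :
    firstIndex B x = j ↔ x ∈ disjointed B j := by
  simp [firstIndex, show ∃ n, x ∈ B n from ⟨n, hx⟩, Nat.find_eq_iff, disjointed_eq_inter_compl]

lemma firstIndex_le {x : α} {n : ℕ} (hx : x ∈ B n) : firstIndex B x ≤ n := by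
  classical
  simp only [firstIndex, show ∃ n, x ∈ B n from ⟨n, hx⟩, dif_pos]
  exact Nat.find_min' _ hx

lemma isRelMax_lexRel_firstIndex {r : ℕ → ℕ → Prop} {h : ℕ → α → α → Prop} {S : Set α} {j : ℕ}
    {m : α} (hS : S ⊆ ⋃ n, B n) (hj : IsRelMax r (firstIndex B '' S) j)
    (hm : IsRelMax (h j) (S ∩ disjointed B j) m) : IsRelMax (lexRel r (firstIndex B) h) S m := by
  obtain ⟨⟨hmS, hmj⟩, hmax⟩ := hm
  obtain rfl : firstIndex B m = j := (firstIndex_eq_iff (disjointed_subset B j hmj) j).2 hmj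
  refine isRelMax_lexRel hj ⟨⟨hmS, rfl⟩, fun x hx => hmax x ⟨hx.1, ?_⟩⟩
  obtain ⟨i, hxi⟩ := mem_iUnion.1 (hS hx.1)
  exact (firstIndex_eq_iff hxi _).1 hx.2

end Blocks

section Construction

variable {α : Type*}

lemma exists_isMaximizing_insert_of_sUnion_subset {s : α → α → Prop} [IsWellOrder α s]
    {𝓣 : Set (Set α)} {W : Set α} (hW : ⋃₀ 𝓣 ⊆ W) (hs : IsMaximizing s (insert (⋃₀ 𝓣) 𝓣)) :
    ∃ t, IsWellOrder α t ∧ IsMaximizing t (insert W 𝓣) := by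
  by_cases hWU : W ⊆ ⋃₀ 𝓣
  · exact ⟨s, inferInstance, by rwa [hW.antisymm hWU] at hs⟩
  obtain ⟨p, hpW, hpU⟩ := not_subset.1 hWU
  refine ⟨topRel s p, inferInstance, forall_mem_insert.2 ⟨fun _ => ⟨p, isRelMax_topRel hpW⟩, ?_⟩⟩
  intro T hT hTne
  obtain ⟨m, hm⟩ := hs T (mem_insert_of_mem _ hT) hTne
  exact ⟨m, hm.topRel fun hpT => hpU ⟨T, hT, hpT⟩⟩

lemma exists_isMaximizing_insert_sUnion_of_finite {𝓑 : Set (Set α)} (h : ∀ B ∈ 𝓑, B.Finite) :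
    ∃ t, IsWellOrder α t ∧ IsMaximizing t (insert (⋃₀ 𝓑) 𝓑) := by
  rcases (⋃₀ 𝓑).eq_empty_or_nonempty with hV | ⟨p, hp⟩
  · refine ⟨WellOrderingRel, inferInstance, isMaximizing_of_finite ?_⟩
    exact forall_mem_insert.2 ⟨hV ▸ finite_empty, h⟩
  · exact ⟨topRel WellOrderingRel p, inferInstance,
      forall_mem_insert.2 ⟨fun _ => ⟨p, isRelMax_topRel hp⟩, isMaximizing_of_finite h⟩⟩

lemma exists_isMaximizing_of_disjointed (B : ℕ → Set α) (h : ℕ → α → α → Prop)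
    (hwo : ∀ j, IsWellOrder α (h j))
    (hh : ∀ j, IsMaximizing (h j) ((· ∩ disjointed B j) '' range B)) :
    ∃ t, IsWellOrder α t ∧ IsMaximizing t (insert (⋃ n, B n) (range B)) := by
  obtain ⟨j₀, hj₀⟩ : ∃ j₀, (⋃ n, B n).Nonempty → (disjointed B j₀).Nonempty := by
    by_cases hV : (⋃ n, B n).Nonempty
    · rw [← iUnion_disjointed, nonempty_iUnion] at hV
      exact hV.imp fun _ h _ => h
    · exact ⟨0, fun h => absurd h hV⟩
  let r : ℕ → ℕ → Prop := topRel (· < ·) j₀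
  have hmax (n j : ℕ) (hne : (B n ∩ disjointed B j).Nonempty) :
      ∃ m, IsRelMax (h j) (B n ∩ disjointed B j) m :=
    hh j _ (mem_image_of_mem _ (mem_range_self n)) hne
  refine ⟨lexRel r (firstIndex B) h, isWellOrder_lexRel _ _ _,
    forall_mem_insert.2 ⟨fun hV => ?_, ?_⟩⟩
  · obtain ⟨x₀, hx₀⟩ := hj₀ hV
    have hW : disjointed B j₀ ⊆ B j₀ := disjointed_subset B j₀
    have hfiber : (⋃ n, B n) ∩ disjointed B j₀ = B j₀ ∩ disjointed B j₀ := by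
      rw [inter_eq_right.2 (hW.trans (subset_iUnion B j₀)), inter_eq_right.2 hW]
    obtain ⟨m, hm⟩ := hmax j₀ j₀ ⟨x₀, hW hx₀, hx₀⟩
    refine ⟨m, isRelMax_lexRel_firstIndex subset_rfl (isRelMax_topRel ?_) (hfiber ▸ hm)⟩
    exact ⟨x₀, mem_iUnion.2 ⟨j₀, hW hx₀⟩, (firstIndex_eq_iff (hW hx₀) j₀).2 hx₀⟩
  · rintro _ ⟨n, rfl⟩ hne
    have hfin : (firstIndex B '' B n).Finite :=
      (finite_Iic n).subset (image_subset_iff.2 fun x hx => firstIndex_le hx)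
    obtain ⟨_, hj⟩ := exists_isRelMax_of_finite (s := r) hfin (hne.image _)
    obtain ⟨x, hx, rfl⟩ := hj.1
    obtain ⟨m, hm⟩ := hmax n _ ⟨x, hx, (firstIndex_eq_iff hx _).1 rfl⟩
    exact ⟨m, isRelMax_lexRel_firstIndex (subset_iUnion B n) hj hm⟩

end Construction

section Countable

variable {α : Type u} {ρ : Cardinal.{u}}

lemma exists_isMaximizing_insert_sUnion_succ {𝓑 : Set (Set α)} {k : ℕ} (hcnt : 𝓑.Countable)
    (hC : HasPropC 𝓑 (k + 2) ρ)
    (ih : ∀ 𝓣 : Set (Set α), 𝓣.Countable → HasPropC 𝓣 (k + 1) ρ →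
      ∃ s, IsWellOrder α s ∧ IsMaximizing s (insert (⋃₀ 𝓣) 𝓣)) :
    ∃ t, IsWellOrder α t ∧ IsMaximizing t (insert (⋃₀ 𝓑) 𝓑) := by
  rcases 𝓑.eq_empty_or_nonempty with rfl | h𝓑
  · exact ⟨WellOrderingRel, inferInstance, isMaximizing_of_finite (by simp)⟩
  obtain ⟨B, rfl⟩ := hcnt.exists_eq_range h𝓑
  have hblock : ∀ j, ∃ h, IsWellOrder α h ∧
      IsMaximizing h (insert (disjointed B j) (traces (range B) (disjointed B j))) := by
    intro j
    obtain ⟨g, _, hg⟩ := ih _ ((hcnt.image _).mono sdiff_subset)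
      (hC.traces (mem_range_self j) (disjointed_subset B j))
    exact exists_isMaximizing_insert_of_sUnion_subset (sUnion_traces_subset _) hg
  choose h hwo hmax using hblock
  rw [sUnion_range]
  refine exists_isMaximizing_of_disjointed B h hwo fun j => (hmax j).mono ?_
  rw [traces, insert_sdiff_singleton]
  exact subset_insert _ _

theorem exists_isMaximizing_insert_sUnion (hρ : ρ ≤ ℵ₀) (k : ℕ) {𝓑 : Set (Set α)}
    (hcnt : 𝓑.Countable) (hC : HasPropC 𝓑 (k + 1) ρ) :
    ∃ s, IsWellOrder α s ∧ IsMaximizing s (insert (⋃₀ 𝓑) 𝓑) := by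
  induction k generalizing 𝓑 with
  | zero => exact exists_isMaximizing_insert_sUnion_of_finite fun B hB => hC.finite_of_one hρ hB
  | succ k ih => exact exists_isMaximizing_insert_sUnion_succ hcnt hC fun _ => ih

end Countable

/-- Every countable hypergraph possessing property C(k,r) for some `k, r ∈ ω`
has a maximizing well-ordering. -/
theorem maxWO_of_countable {α : Type u}
    (𝓐 : Set (Set α)) (hcnt : 𝓐.Countable)
    (hne : ∀ A ∈ 𝓐, A.Nonempty)
    (k r : ℕ) (hC : HasPropC 𝓐 k r) :
    HasMaxWO 𝓐 := by
  obtain ⟨s, _, hs⟩ :=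
    exists_isMaximizing_insert_sUnion (natCast_lt_aleph0 (n := r)).le k hcnt hC.succ
  refine ⟨Subrel s (· ∈ ⋃₀ 𝓐), inferInstance, fun E hE => ?_⟩
  obtain ⟨m, hmE, hm⟩ := hs E (mem_insert_of_mem _ hE) (hne E hE)
  exact ⟨⟨m, E, hE, hmE⟩, hmE, fun x hx => hm x hx⟩
end
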